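/- Let G be a finite DAG with the ReLU node semantics a_u = ReLU(∑_{v→u} k_{v,u} a_v) for non-leaf nodes, and let A(u) = {v : in-degree(v)=0, there exists a path from v to u passing only through nodes w with a_w > 0}. If a_t > 0 for the root t and all nodes on paths from activated leaves to t are activated, then a_t = ∑_{v ∈ A(t)} a_v · g_v, where g_v is the path-sum over activated paths of edge-weight products; moreover, leaves v with a_v = 0 contribute zero to this sum. -/

import Mathlib

/-!
Strong induction along the topological order. An activated path into a non-leaf `u` ends
with an edge `v → u` whose tail `v` is either activated or the start of the path, so grouping
activated paths by their last edge writes the leaf attribution `∑_w a_w g_w(u)` as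
`∑_v k_{v,u} c_v`, where `c_v` collects the activated paths into `v` that may be extended.
If `a_v > 0`, `c_v` is the whole attribution of `v`, which is `a_v` by induction; otherwise only
the trivial path `{v}` survives, giving `a_v` for a leaf, while a non-leaf has `a_v = 0` by ReLU.
For activated `u` the ReLU is the identity, so the attribution is `∑_v k_{v,u} a_v = a_u`.
Leaves with no activated path to `t` have `g_v = 0` and drop out of the sum.
-/

open Finset

noncomputable section
open scoped Classical

/-- Product of edge weights along a list of vertices. -/
def pathProd {n : ℕ} (k : Fin n → Fin n → ℝ) : List (Fin n) → ℝ
  | [] => 1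
  | [_] => 1
  | i :: j :: rest => k i j * pathProd k (j :: rest)

/-- Vertex sets of potential (increasing) paths from `v` to `t`. -/
def pathFinsets {n : ℕ} (v t : Fin n) : Finset (Finset (Fin n)) :=
  Finset.univ.powerset.filter (fun S => v ∈ S ∧ t ∈ S ∧ ∀ w ∈ S, v ≤ w ∧ w ≤ t)

/-- Sum over all directed paths from `v` to `t` of the product of edge weights. -/
def pathSum {n : ℕ} (k : Fin n → Fin n → ℝ) (v t : Fin n) : ℝ :=
  ∑ S ∈ pathFinsets v t, pathProd k (S.sort (· ≤ ·))

/-- There exists a genuine directed path (all edges present) from `v` to `t`. -/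
def hasPath {n : ℕ} (k : Fin n → Fin n → ℝ) (v t : Fin n) : Prop :=
  ∃ S ∈ pathFinsets v t, (S.sort (· ≤ ·)).Chain' (fun i j => k i j ≠ 0)

/-- Path sum restricted to paths all of whose intermediate nodes are activated. -/
def actPathSum {n : ℕ} (k : Fin n → Fin n → ℝ) (a : Fin n → ℝ) (v t : Fin n) : ℝ :=
  ∑ S ∈ (pathFinsets v t).filter (fun S => ∀ w ∈ S, w ≠ v → w ≠ t → 0 < a w),
    pathProd k (S.sort (· ≤ ·))

/-- Existence of an activated path (edges present, intermediate nodes activated). -/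
def hasActPath {n : ℕ} (k : Fin n → Fin n → ℝ) (a : Fin n → ℝ) (v t : Fin n) : Prop :=
  ∃ S ∈ pathFinsets v t, (S.sort (· ≤ ·)).Chain' (fun i j => k i j ≠ 0) ∧
    ∀ w ∈ S, w ≠ v → w ≠ t → 0 < a w

lemma Finset.sort_insert_of_forall_le {α : Type*} [LinearOrder α] {s : Finset α} {a : α}
    (h : ∀ b ∈ s, b ≤ a) (ha : a ∉ s) :
    (insert a s).sort (· ≤ ·) = s.sort (· ≤ ·) ++ [a] := by
  refine List.Perm.eq_of_pairwise' (Finset.pairwise_sort ..) ?_ ?_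
  · rw [List.pairwise_append]
    exact ⟨Finset.pairwise_sort .., List.pairwise_singleton _ _,
      fun x hx y hy => List.mem_singleton.mp hy ▸ h x (Finset.mem_sort _ |>.mp hx)⟩
  · exact ((Finset.sort_perm_toList _ _).trans ((Finset.toList_insert ha).trans
      (List.Perm.cons a (Finset.sort_perm_toList _ _).symm))).trans
      (List.perm_append_singleton _ _).symm

section PathProd

variable {n : ℕ} (k : Fin n → Fin n → ℝ)

lemma pathProd_append_pair (v u : Fin n) :
    ∀ l : List (Fin n), pathProd k (l ++ [v, u]) = pathProd k (l ++ [v]) * k v u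
  | [] => by simp [pathProd]
  | [x] => by simp [pathProd, mul_comm]
  | x :: y :: l => by
    simp only [List.cons_append, pathProd] at *
    rw [← List.cons_append, ← List.cons_append, pathProd_append_pair v u (y :: l), mul_assoc]

lemma isChain_of_pathProd_ne_zero :
    ∀ l : List (Fin n), pathProd k l ≠ 0 → l.IsChain (fun i j => k i j ≠ 0)
  | [], _ => List.isChain_nil
  | [i], _ => List.isChain_singleton i
  | i :: j :: l, h => by
    rw [pathProd, mul_ne_zero_iff] at h
    exact List.isChain_cons_cons.mpr ⟨h.1, isChain_of_pathProd_ne_zero (j :: l) h.2⟩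

end PathProd

section Paths

variable {n : ℕ} {S : Finset (Fin n)} {w v u : Fin n}

@[simp]
lemma mem_pathFinsets : S ∈ pathFinsets v u ↔ v ∈ S ∧ u ∈ S ∧ ∀ x ∈ S, v ≤ x ∧ x ≤ u := by
  simp [pathFinsets]

lemma pathFinsets_self (u : Fin n) : pathFinsets u u = {{u}} := by
  ext S
  simp only [mem_pathFinsets, Finset.mem_singleton]
  constructor
  · rintro ⟨hu, -, hS⟩
    exact Finset.eq_singleton_iff_unique_mem.mpr
      ⟨hu, fun x hx => le_antisymm (hS x hx).2 (hS x hx).1⟩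
  · rintro rfl
    simp

lemma eq_of_mem_pathFinsets {w' v' : Fin n} (h : S ∈ pathFinsets w v)
    (h' : S ∈ pathFinsets w' v') : v = v' := by
  rw [mem_pathFinsets] at h h'
  exact le_antisymm (h'.2.2 v h.2.1).2 (h.2.2 v' h'.2.1).2

lemma notMem_of_mem_pathFinsets (hS : S ∈ pathFinsets w v) (hvu : v < u) : u ∉ S :=
  fun hu => (mem_pathFinsets.mp hS).2.2 u hu |>.2.not_gt hvu

lemma insert_mem_pathFinsets (hS : S ∈ pathFinsets w v) (hvu : v < u) :
    insert u S ∈ pathFinsets w u := by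
  obtain ⟨hw, hv, hS⟩ := mem_pathFinsets.mp hS
  refine mem_pathFinsets.mpr ⟨Finset.mem_insert_of_mem hw, Finset.mem_insert_self _ _, ?_⟩
  intro x hx
  rcases Finset.mem_insert.mp hx with rfl | hx
  · exact ⟨(hS v hv).1.trans hvu.le, le_rfl⟩
  · exact ⟨(hS x hx).1, (hS x hx).2.trans hvu.le⟩

lemma exists_erase_mem_pathFinsets (hS : S ∈ pathFinsets w u) (hwu : w ≠ u) :
    ∃ v ∈ S, v < u ∧ S.erase u ∈ pathFinsets w v := by
  obtain ⟨hw, hu, hS⟩ := mem_pathFinsets.mp hS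
  have hne : (S.erase u).Nonempty := ⟨w, Finset.mem_erase.mpr ⟨hwu, hw⟩⟩
  have hmax := Finset.mem_erase.mp ((S.erase u).max'_mem hne)
  refine ⟨_, hmax.2, lt_of_le_of_ne (hS _ hmax.2).2 hmax.1, mem_pathFinsets.mpr
    ⟨Finset.mem_erase.mpr ⟨hwu, hw⟩, (S.erase u).max'_mem hne, fun x hx => ?_⟩⟩
  exact ⟨(hS x (Finset.mem_of_mem_erase hx)).1, (S.erase u).le_max' x hx⟩

lemma pathProd_sort_insert (k : Fin n → Fin n → ℝ) (hS : S ∈ pathFinsets w v) (hvu : v < u) :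
    pathProd k ((insert u S).sort (· ≤ ·)) = pathProd k (S.sort (· ≤ ·)) * k v u := by
  obtain ⟨-, hv, hle⟩ := mem_pathFinsets.mp hS
  have hsortS : S.sort (· ≤ ·) = (S.erase v).sort (· ≤ ·) ++ [v] := by
    conv_lhs => rw [← Finset.insert_erase hv]
    exact Finset.sort_insert_of_forall_le (fun b hb => (hle b (Finset.mem_of_mem_erase hb)).2)
      (Finset.notMem_erase v S)
  rw [Finset.sort_insert_of_forall_le (fun b hb => (hle b hb).2.trans hvu.le)
    (notMem_of_mem_pathFinsets hS hvu), hsortS, List.append_assoc, List.singleton_append,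
    pathProd_append_pair]

end Paths

section ActivatedPaths

variable {n : ℕ} (k : Fin n → Fin n → ℝ) (a : Fin n → ℝ) {S : Finset (Fin n)} {w v u : Fin n}

def activatedPaths (v t : Fin n) : Finset (Finset (Fin n)) :=
  (pathFinsets v t).filter (fun S => ∀ w ∈ S, w ≠ v → w ≠ t → 0 < a w)

lemma actPathSum_eq_sum_activatedPaths (v t : Fin n) :
    actPathSum k a v t = ∑ S ∈ activatedPaths a v t, pathProd k (S.sort (· ≤ ·)) :=
  rfl

lemma actPathSum_self (u : Fin n) : actPathSum k a u u = 1 := by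
  simp [actPathSum, pathFinsets_self, Finset.filter_singleton, pathProd]

variable {a}

lemma insert_mem_activatedPaths (hS : S ∈ activatedPaths a w v) (hvu : v < u)
    (hv : 0 < a v ∨ v = w) : insert u S ∈ activatedPaths a w u := by
  obtain ⟨hSp, hact⟩ := Finset.mem_filter.mp hS
  refine Finset.mem_filter.mpr ⟨insert_mem_pathFinsets hSp hvu, fun x hx hxw hxu => ?_⟩
  obtain rfl | hx := Finset.mem_insert.mp hx
  · exact absurd rfl hxu
  obtain rfl | hxv := eq_or_ne x v
  · exact hv.resolve_right hxw
  · exact hact x hx hxw hxv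

lemma exists_erase_mem_activatedPaths (hS : S ∈ activatedPaths a w u) (hwu : w ≠ u) :
    ∃ v, v < u ∧ (0 < a v ∨ v = w) ∧ S.erase u ∈ activatedPaths a w v := by
  obtain ⟨hSp, hact⟩ := Finset.mem_filter.mp hS
  obtain ⟨v, hvS, hvu, hv⟩ := exists_erase_mem_pathFinsets hSp hwu
  refine ⟨v, hvu, ?_, Finset.mem_filter.mpr ⟨hv, fun x hx hxw _ =>
    hact x (Finset.mem_of_mem_erase hx) hxw (Finset.ne_of_mem_erase hx)⟩⟩
  exact (eq_or_ne v w).elim Or.inr fun hvw => Or.inl (hact v hvS hvw hvu.ne)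

/-- An activated path from `w` to `u ≠ w` is an activated path to some `v < u`, with `v`
activated unless `v = w`, followed by the edge `v → u`. -/
theorem actPathSum_eq_sum_last_edge (hwu : w ≠ u) :
    actPathSum k a w u = ∑ v ∈ Finset.univ.filter (fun v => v < u ∧ (0 < a v ∨ v = w)),
      actPathSum k a w v * k v u := by
  simp only [actPathSum_eq_sum_activatedPaths, Finset.sum_mul]
  rw [Finset.sum_sigma']
  symm
  refine Finset.sum_nbij (fun p => insert u p.2) ?_ ?_ ?_ ?_
  · rintro ⟨v, S⟩ hp
    obtain ⟨hv, hS⟩ := Finset.mem_sigma.mp hp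
    obtain ⟨-, hvu, hav⟩ := Finset.mem_filter.mp hv
    exact insert_mem_activatedPaths hS hvu hav
  · rintro ⟨v, S⟩ hp ⟨v', S'⟩ hp' heq
    obtain ⟨hv, hS⟩ := Finset.mem_sigma.mp hp
    obtain ⟨hv', hS'⟩ := Finset.mem_sigma.mp hp'
    dsimp only at hv hS hv' hS' heq
    have hSp := (Finset.mem_filter.mp hS).1
    have hSp' := (Finset.mem_filter.mp hS').1
    have hSS' : S = S' := by
      rw [← Finset.erase_insert (notMem_of_mem_pathFinsets hSp (Finset.mem_filter.mp hv).2.1),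
        ← Finset.erase_insert (notMem_of_mem_pathFinsets hSp' (Finset.mem_filter.mp hv').2.1)]
      exact congrArg (·.erase u) heq
    subst hSS'
    rw [eq_of_mem_pathFinsets hSp hSp']
  · intro S hS
    obtain ⟨v, hvu, hav, hv⟩ := exists_erase_mem_activatedPaths hS hwu
    refine ⟨⟨v, S.erase u⟩, Finset.mem_sigma.mpr ⟨by simp [hvu, hav], hv⟩, ?_⟩
    exact Finset.insert_erase (mem_pathFinsets.mp (Finset.mem_filter.mp hS).1).2.1
  · rintro ⟨v, S⟩ hp
    obtain ⟨hv, hS⟩ := Finset.mem_sigma.mp hp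
    dsimp only at hv hS
    exact (pathProd_sort_insert k (Finset.mem_filter.mp hS).1
      (Finset.mem_filter.mp hv).2.1).symm

end ActivatedPaths

section Attribution

variable {n : ℕ} {k : Fin n → Fin n → ℝ} {a : Fin n → ℝ} {w v u : Fin n}

def leaves (k : Fin n → Fin n → ℝ) : Finset (Fin n) :=
  Finset.univ.filter fun v => ∀ u, k u v = 0

def leafAttribution (k : Fin n → Fin n → ℝ) (a : Fin n → ℝ) (u : Fin n) : ℝ :=
  ∑ w ∈ leaves k, a w * actPathSum k a w u

lemma actPathSum_eq_zero_of_not_hasActPath (h : ¬ hasActPath k a v u) :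
    actPathSum k a v u = 0 :=
  Finset.sum_eq_zero fun S hS => by
    obtain ⟨hSp, hact⟩ := Finset.mem_filter.mp hS
    by_contra hne
    exact h ⟨S, hSp, isChain_of_pathProd_ne_zero k _ hne, hact⟩

lemma actPathSum_eq_zero_of_forall_eq_zero (hu : ∀ x, k x u = 0) (hwu : w ≠ u) :
    actPathSum k a w u = 0 := by
  simp [actPathSum_eq_sum_last_edge k hwu, hu]

lemma leafAttribution_of_forall_eq_zero (hu : ∀ x, k x u = 0) :
    leafAttribution k a u = a u := by
  rw [leafAttribution, Finset.sum_eq_single u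
    (fun w _ hwu => by rw [actPathSum_eq_zero_of_forall_eq_zero hu hwu, mul_zero])
    (fun h => (h (by simp [leaves, hu])).elim), actPathSum_self, mul_one]

lemma leafAttribution_eq_sum_last_edge (hu : ∃ x, k x u ≠ 0) :
    leafAttribution k a u = ∑ v, (∑ w ∈ leaves k,
      if v < u ∧ (0 < a v ∨ v = w) then a w * actPathSum k a w v else 0) * k v u := by
  have hwu : ∀ w ∈ leaves k, w ≠ u := by
    rintro w hw rfl
    obtain ⟨x, hx⟩ := hu
    exact hx ((Finset.mem_filter.mp hw).2 x)
  rw [leafAttribution, Finset.sum_congr rfl fun w hw => by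
    rw [actPathSum_eq_sum_last_edge k (hwu w hw), Finset.mul_sum, Finset.sum_filter],
    Finset.sum_comm]
  simp only [Finset.sum_mul, ite_mul, zero_mul, mul_assoc]

theorem eq_leafAttribution_of_pos (htopo : ∀ i j, k i j ≠ 0 → i < j)
    (hrec : ∀ u, (∃ v, k v u ≠ 0) → a u = max (∑ v, k v u * a v) 0) (u : Fin n)
    (hau : 0 < a u) : a u = leafAttribution k a u := by
  induction u using WellFoundedLT.induction with
  | _ u ih =>
  by_cases hu : ∀ x, k x u = 0
  · exact (leafAttribution_of_forall_eq_zero hu).symm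
  push Not at hu
  have hsum : a u = ∑ v, k v u * a v := by
    rw [hrec u hu] at hau ⊢
    exact max_eq_left ((lt_max_iff.mp hau).resolve_right (lt_irrefl 0)).le
  rw [hsum, leafAttribution_eq_sum_last_edge hu]
  refine Finset.sum_congr rfl fun v _ => ?_
  rcases eq_or_ne (k v u) 0 with hkv | hkv
  · simp [hkv]
  have hvu := htopo v u hkv
  rw [mul_comm]
  congr 1
  by_cases hav : 0 < a v
  · simp only [hvu, hav, true_or, and_self, if_true]
    exact ih v hvu hav
  simp only [hvu, hav, false_or, true_and, Finset.sum_ite_eq]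
  split_ifs with hv
  · rw [actPathSum_self, mul_one]
  · have hnonneg : 0 ≤ a v := by
      rw [hrec v (by simpa [leaves] using hv)]
      exact le_max_right _ _
    exact le_antisymm (not_lt.mp hav) hnonneg

end Attribution

theorem relu_graph_activated_leaf_attribution_general {n : ℕ} (k : Fin n → Fin n → ℝ)
    (a : Fin n → ℝ) (t : Fin n)
    (htopo : ∀ i j, k i j ≠ 0 → i < j)
    (hrec : ∀ u, (∃ v, k v u ≠ 0) → a u = max (∑ v, k v u * a v) 0)
    (hat : 0 < a t) :
    a t = ∑ v ∈ Finset.univ.filter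
        (fun v => (∀ u, k u v = 0) ∧ hasActPath k a v t),
      a v * actPathSum k a v t ∧
    ∀ v ∈ Finset.univ.filter (fun v => (∀ u, k u v = 0) ∧ hasActPath k a v t),
      a v = 0 → a v * actPathSum k a v t = 0 := by
  refine ⟨?_, fun v _ hv => by rw [hv, zero_mul]⟩
  rw [eq_leafAttribution_of_pos htopo hrec t hat, leafAttribution, leaves, ← Finset.filter_filter]
  refine (Finset.sum_subset (Finset.filter_subset _ _) fun v hleaf hv => ?_).symm
  rw [actPathSum_eq_zero_of_not_hasActPath fun h => hv (Finset.mem_filter.mpr ⟨hleaf, h⟩),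
    mul_zero]

/-- ReLU computation graph; with A(t) the set of leaves having an
activated path to the root t, if a_t > 0 and every node lying on a path from an
activated leaf to t is activated, then a_t equals the sum over A(t) of leaf
activation times the activated-path-sum gradient; moreover leaves with zero
activation contribute zero. -/
theorem relu_graph_activated_leaf_attribution {n : ℕ} (k : Fin n → Fin n → ℝ)
    (a : Fin n → ℝ) (t : Fin n)
    (htopo : ∀ i j, k i j ≠ 0 → i < j)
    (hrec : ∀ u, (∃ v, k v u ≠ 0) → a u = max (∑ v, k v u * a v) 0)
    (hat : 0 < a t)
    (hact : ∀ v w, (∀ u, k u v = 0) → 0 < a v → hasPath k v w → hasPath k w t →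
      0 < a w) :
    a t = ∑ v ∈ Finset.univ.filter
        (fun v => (∀ u, k u v = 0) ∧ hasActPath k a v t),
      a v * actPathSum k a v t ∧
    ∀ v ∈ Finset.univ.filter (fun v => (∀ u, k u v = 0) ∧ hasActPath k a v t),
      a v = 0 → a v * actPathSum k a v t = 0 :=
  relu_graph_activated_leaf_attribution_general k a t htopo hrec hat
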